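/- arXiv:2201.03631 — 3 statements merged into one kernel-verified Lean document; each statement's English description precedes it below -/
import Mathlib

section
/- Let M be a small elementary submodel of the monster model 𝕄. If an ultraimaginary a_E is bounded over M (i.e., a_E ∈ bddᵘ(M)), then a_E is definable over M (i.e., a_E ∈ dclᵘ(M)). -/
open FirstOrder Cardinal

universe u v w

namespace BddUltra

variable (L : FirstOrder.Language.{u, u}) (M : Type u) [L.Structure M]

/-- The automorphism group of `M` (composition as multiplication). -/
instance : Group (M ≃[L] M) where
  mul f g := f.comp g
  one := Language.Equiv.refl L M
  inv := Language.Equiv.symm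
  mul_assoc f g h := by ext x; rfl
  one_mul f := by ext x; rfl
  mul_one f := by ext x; rfl
  inv_mul_cancel f := by ext x; exact f.toEquiv.symm_apply_apply x

/-- The cardinality `|T|` of the theory: the cardinality of the language plus `ℵ₀`. -/
def cardT : Cardinal.{u} := L.card + ℵ₀

/-- Two tuples realize the same complete type over `∅`. -/
def SameType {α : Type v} (a b : α → M) : Prop :=
  ∀ φ : L.Formula α, φ.Realize a ↔ φ.Realize b

/-- Two tuples realize the same complete type over the set `A ⊆ M` of parameters. -/
def SameTypeOver (A : Set M) {α : Type v} (a b : α → M) : Prop :=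
  ∀ φ : L.Formula (↥A ⊕ α),
    φ.Realize (Sum.elim (Subtype.val : ↥A → M) a) ↔
      φ.Realize (Sum.elim (Subtype.val : ↥A → M) b)

theorem SameType.comp {α : Type v} {γ : Type w} {a b : α → M} (h : SameType L M a b)
    (g : γ → α) : SameType L M (a ∘ g) (b ∘ g) := by
  intro φ
  have := h (φ.relabel g)
  rwa [Language.Formula.realize_relabel, Language.Formula.realize_relabel] at this

/-- An invariant equivalence relation of arity `α` on `α`-tuples from `M`. -/
structure IER (α : Type u) : Type u where
  rel : (α → M) → (α → M) → Prop
  equiv : Equivalence rel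
  invariant : ∀ a b c d : α → M,
    SameType L M (Sum.elim a b) (Sum.elim c d) → (rel a b ↔ rel c d)

def IER.setoid {α : Type u} (E : IER L M α) : Setoid (α → M) := ⟨E.rel, E.equiv⟩

/-- The pair (juxtaposition) of two invariant equivalence relations. -/
def IER.prod {α β : Type u} (E : IER L M α) (F : IER L M β) : IER L M (α ⊕ β) where
  rel x y := E.rel (x ∘ Sum.inl) (y ∘ Sum.inl) ∧ F.rel (x ∘ Sum.inr) (y ∘ Sum.inr)
  equiv := ⟨fun _ => ⟨E.equiv.refl _, F.equiv.refl _⟩,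
    fun h => ⟨E.equiv.symm h.1, F.equiv.symm h.2⟩,
    fun h h' => ⟨E.equiv.trans h.1 h'.1, F.equiv.trans h.2 h'.2⟩⟩
  invariant := by
    intro a b c d h
    have e1 : ∀ (x : α ⊕ β → M) (y : α ⊕ β → M),
        (Sum.elim x y) ∘ (Sum.map Sum.inl Sum.inl : α ⊕ α → (α ⊕ β) ⊕ (α ⊕ β))
          = Sum.elim (x ∘ Sum.inl) (y ∘ Sum.inl) := by
      intro x y; funext i; cases i <;> rfl
    have e2 : ∀ (x : α ⊕ β → M) (y : α ⊕ β → M),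
        (Sum.elim x y) ∘ (Sum.map Sum.inr Sum.inr : β ⊕ β → (α ⊕ β) ⊕ (α ⊕ β))
          = Sum.elim (x ∘ Sum.inr) (y ∘ Sum.inr) := by
      intro x y; funext i; cases i <;> rfl
    have h1 := h.comp (L := L) (M := M) (Sum.map Sum.inl Sum.inl)
    have h2 := h.comp (L := L) (M := M) (Sum.map Sum.inr Sum.inr)
    rw [e1, e1] at h1
    rw [e2, e2] at h2
    exact and_congr (E.invariant _ _ _ _ h1) (F.invariant _ _ _ _ h2)

/-- The set of automorphisms fixing the ultraimaginary `a_E`. -/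
def autU {α : Type u} (E : IER L M α) (a : α → M) : Set (M ≃[L] M) :=
  {σ | E.rel a (⇑σ ∘ a)}

/-- The set of automorphisms fixing the set `A` pointwise. -/
def autSet (A : Set M) : Set (M ≃[L] M) := {σ | ∀ x ∈ A, σ x = x}

/-- The set of automorphisms fixing the set `A` and the tuple `u` pointwise. -/
def autSetTup (A : Set M) {γ : Type v} (u : γ → M) : Set (M ≃[L] M) :=
  {σ | (∀ x ∈ A, σ x = x) ∧ ∀ i, σ (u i) = u i}

/-- The ultraimaginary `b_F` is bounded over a parameter set whose pointwise
stabilizer is `X`: the `X`-orbit of `b` meets fewer than `κ` classes of `F`. -/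
def BddU (κ : Cardinal.{u}) (X : Set (M ≃[L] M)) {β : Type u} (F : IER L M β)
    (b : β → M) : Prop :=
  ∃ S : Set (β → M), #S < κ ∧ ∀ σ ∈ X, ∃ s ∈ S, F.rel (⇑σ ∘ b) s

/-- The cardinality of the orbit of the ultraimaginary `b_F` under the set `X`
of automorphisms. -/
def orbitCard (X : Set (M ≃[L] M)) {β : Type u} (F : IER L M β) (b : β → M) :
    Cardinal.{u} :=
  #(Set.range fun σ : X => Quotient.mk F.setoid (⇑σ.1 ∘ b))

/-- `b ⫝ᵇᵘ_A c`, expressed in terms of the pointwise stabilizers `XA`, `XAb`, `XAc` of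
`A`, `Ab` and `Ac`: an ultraimaginary is bounded over `Ab` and over `Ac` iff it is
bounded over `A`. -/
def IndepBU (κ : Cardinal.{u}) (XA XAb XAc : Set (M ≃[L] M)) : Prop :=
  ∀ (δ : Type u) (H : IER L M δ) (d : δ → M),
    (BddU L M κ XAb H d ∧ BddU L M κ XAc H d) ↔ BddU L M κ XA H d

/-- The set of automorphisms fixing an elementary substructure pointwise. -/
def autES (N : L.ElementarySubstructure M) : Set (M ≃[L] M) :=
  autSet L M (N : Set M)

/-- `Autf(𝕄/x)` where `X = Aut(𝕄/x)`: the subgroup generated by all pointwise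
stabilizers of small models that are contained in `X`. -/
def autfGen (κ : Cardinal.{u}) (X : Set (M ≃[L] M)) : Subgroup (M ≃[L] M) :=
  Subgroup.closure {σ | ∃ N : L.ElementarySubstructure M,
    #(N : Set M) < κ ∧ autES L M N ⊆ X ∧ σ ∈ autES L M N}

/-- The group of Lascar strong automorphisms over the set `A ⊆ M`: generated by the
pointwise stabilizers of small models containing `A`. -/
def lascarGrp (κ : Cardinal.{u}) (A : Set M) : Subgroup (M ≃[L] M) :=
  Subgroup.closure {σ | ∃ N : L.ElementarySubstructure M,
    #(N : Set M) < κ ∧ A ⊆ (N : Set M) ∧ σ ∈ autES L M N}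

/-- κ-saturation: every finitely realizable set of formulas over a parameter tuple of
arity `< κ`, in `< κ` many variables, is realized. -/
def Saturated (κ : Cardinal.{u}) : Prop :=
  ∀ (α β : Type u), #α < κ → #β < κ → ∀ (a : α → M) (p : Set (L.Formula (α ⊕ β))),
    (∀ s : Finset (L.Formula (α ⊕ β)), ↑s ⊆ p →
      ∃ b : β → M, ∀ φ ∈ s, φ.Realize (Sum.elim a b)) →
    ∃ b : β → M, ∀ φ ∈ p, φ.Realize (Sum.elim a b)

/-- Strong κ-homogeneity: tuples of arity `< κ` with the same type over `∅` are
conjugate under an automorphism. -/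
def Homog (κ : Cardinal.{u}) : Prop :=
  ∀ (α : Type u) (a b : α → M), #α < κ → SameType L M a b →
    ∃ σ : M ≃[L] M, ∀ i, σ (a i) = b i

/-- `M` is a monster model with bound `κbar`: `κbar` is a sufficiently large
(uncountable, regular, strong limit, above `|T|`) cardinal, and `M` is
`κbar`-saturated and strongly `κbar`-homogeneous. -/
structure Monster (κbar : Cardinal.{u}) : Prop where
  aleph0_lt : ℵ₀ < κbar
  isRegular : κbar.IsRegular
  strongLimit : ∀ ρ : Cardinal.{u}, ρ < κbar → 2 ^ ρ < κbar
  lang_lt : L.card < κbar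
  saturated : Saturated L M κbar
  homog : Homog L M κbar

/-- A hyperimaginary: the class of a countable tuple under a countably
type-definable (over `∅`) equivalence relation. -/
structure Hyp : Type u where
  rep : ℕ → M
  fmls : Set (L.Formula (ℕ ⊕ ℕ))
  countable : fmls.Countable
  equiv : Equivalence fun a b : ℕ → M => ∀ φ ∈ fmls, φ.Realize (Sum.elim a b)

/-- The automorphisms fixing each hyperimaginary in the set `A`. -/
def autHyp (A : Set (Hyp L M)) : Set (M ≃[L] M) :=
  {σ | ∀ h ∈ A, ∀ φ ∈ h.fmls, φ.Realize (Sum.elim h.rep (⇑σ ∘ h.rep))}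

/-- The automorphisms fixing each hyperimaginary in `A` and the tuple `u` pointwise. -/
def autHypTup (A : Set (Hyp L M)) {γ : Type v} (u : γ → M) : Set (M ≃[L] M) :=
  {σ | σ ∈ autHyp L M A ∧ ∀ i, σ (u i) = u i}

/-- Flattening of a finite subsequence of a sequence of tuples into a single tuple. -/
def flatten {ι : Type v} {β : Type w} (f : ι → β → M) {n : ℕ} (s : Fin n → ι) :
    Fin n × β → M := fun p => f (s p.1) p.2

/-- A sequence of tuples is `A`-indiscernible (`A ⊆ M` a set of real parameters). -/
def IndiscOver (A : Set M) {ι : Type v} [Preorder ι] {β : Type w} (f : ι → β → M) : Prop :=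
  ∀ (n : ℕ) (s t : Fin n → ι), StrictMono s → StrictMono t →
    SameTypeOver L M A (flatten M f s) (flatten M f t)

/-- Two sequences have the same Ehrenfeucht–Mostowski type over `A ⊆ M`. -/
def SameEMOver (A : Set M) {ι : Type v} [Preorder ι] {ι' : Type w} [Preorder ι']
    {β : Type u} (f : ι → β → M) (g : ι' → β → M) : Prop :=
  ∀ (n : ℕ) (s : Fin n → ι) (t : Fin n → ι'), StrictMono s → StrictMono t →
    SameTypeOver L M A (flatten M f s) (flatten M g t)

/-- A sequence of tuples is `A`-indiscernible, for `A` a set of hyperimaginaries: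
any two increasing tuples from the sequence are conjugate under `Aut(𝕄/A)`. -/
def IndiscOverHyp (A : Set (Hyp L M)) {ι : Type v} [Preorder ι] {β : Type w}
    (f : ι → β → M) : Prop :=
  ∀ (n : ℕ) (s t : Fin n → ι), StrictMono s → StrictMono t →
    ∃ σ ∈ autHyp L M A, ∀ (i : Fin n) (x : β), σ (f (s i) x) = f (t i) x

/-- Two sequences have the same EM-type over the set `A` of hyperimaginaries. -/
def SameEMOverHyp (A : Set (Hyp L M)) {ι : Type v} [Preorder ι] {ι' : Type w} [Preorder ι']
    {β : Type u} (f : ι → β → M) (g : ι' → β → M) : Prop :=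
  ∀ (n : ℕ) (s : Fin n → ι) (t : Fin n → ι'), StrictMono s → StrictMono t →
    ∃ σ ∈ autHyp L M A, ∀ (i : Fin n) (x : β), σ (f (s i) x) = g (t i) x

/-- A sequence of `β`-tuples from `N`, indexed by an arbitrary small linear order. -/
structure Seq (N : Type u) (β : Type u) : Type (u + 1) where
  idx : Type u
  [ord : LinearOrder idx]
  val : idx → β → N

attribute [instance] Seq.ord

/-- Concatenation `I + J` of sequences. -/
def Seq.concat {N β : Type u} (I J : Seq N β) : Seq N β where
  idx := I.idx ⊕ₗ J.idx
  val := fun x => Sum.elim I.val J.val (ofLex x)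

/-- The sequence `I` flattened into a single tuple. -/
def Seq.flat {N β : Type u} (I : Seq N β) : I.idx × β → N := fun p => I.val p.1 p.2

/-- The image `σ · I` of a sequence under an automorphism. -/
def Seq.map {β : Type u} (σ : M ≃[L] M) (I : Seq M β) : Seq M β where
  idx := I.idx
  ord := I.ord
  val := fun i x => σ (I.val i x)

/-- The sequence `(b_i)_{i < ω}` packaged as a `Seq`. -/
def Seq.ofNat {N β : Type u} (b : ℕ → β → N) : Seq N β where
  idx := ULift.{u} ℕ
  val := fun n => b n.down

/-- `I ∼_A J`: both sequences are infinite and `I + J` or `J + I` is `A`-indiscernible. -/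
def SimSeq (A : Set M) {β : Type u} (I J : Seq M β) : Prop :=
  Infinite I.idx ∧ Infinite J.idx ∧
    (IndiscOver L M A (I.concat J).val ∨ IndiscOver L M A (J.concat I).val)

/-- `I ≈_A J`: the transitive closure of `∼_A`. -/
def ApproxSeq (A : Set M) {β : Type u} : Seq M β → Seq M β → Prop :=
  Relation.TransGen (SimSeq L M A)

/-- `I ∼_A J` for `A` a set of hyperimaginaries. -/
def SimSeqHyp (A : Set (Hyp L M)) {β : Type u} (I J : Seq M β) : Prop :=
  Infinite I.idx ∧ Infinite J.idx ∧
    (IndiscOverHyp L M A (I.concat J).val ∨ IndiscOverHyp L M A (J.concat I).val)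

/-- `I ≈_A J` for `A` a set of hyperimaginaries. -/
def ApproxSeqHyp (A : Set (Hyp L M)) {β : Type u} : Seq M β → Seq M β → Prop :=
  Relation.TransGen (SimSeqHyp L M A)

/-- `u ⫝ᵇᵘ_A v` for tuples `u`, `v` over a set `A ⊆ M` of real parameters. -/
def IndepBUReal (κ : Cardinal.{u}) (A : Set M) {γ : Type v} {δ : Type w}
    (x : γ → M) (y : δ → M) : Prop :=
  IndepBU L M κ (autSet L M A) (autSetTup L M A x) (autSetTup L M A y)

/-- `u ⫝ᵇᵘ_A v` for tuples `u`, `v` over a set `A` of hyperimaginaries. -/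
def IndepBUHyp (κ : Cardinal.{u}) (A : Set (Hyp L M)) {γ : Type v} {δ : Type w}
    (x : γ → M) (y : δ → M) : Prop :=
  IndepBU L M κ (autHyp L M A) (autHypTup L M A x) (autHypTup L M A y)

/-- A total `⫝ᵇᵘ`-Morley sequence over the set `A ⊆ M`. -/
def TotalMorleyReal (κ : Cardinal.{u}) (A : Set M) {β : Type u} (b : ℕ → β → M) : Prop :=
  IndiscOver L M A b ∧
    ∀ I J : Seq M β, #I.idx < κ → #J.idx < κ →
      SameEMOver L M A ((I.concat J).val) b →
        IndepBUReal L M κ A I.flat J.flat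

/-- A total `⫝ᵇᵘ`-Morley sequence over the set `A` of hyperimaginaries. -/
def TotalMorleyHyp (κ : Cardinal.{u}) (A : Set (Hyp L M)) {β : Type u}
    (b : ℕ → β → M) : Prop :=
  IndiscOverHyp L M A b ∧
    ∀ I J : Seq M β, #I.idx < κ → #J.idx < κ →
      SameEMOverHyp L M A ((I.concat J).val) b →
        IndepBUHyp L M κ A I.flat J.flat

/-- `tp(b/Ac)` divides over `A`. -/
def Divides (A : Set M) {β : Type v} {γ : Type w} (b : β → M) (c : γ → M) : Prop :=
  ∃ ci : ℕ → γ → M, ci 0 = c ∧ IndiscOver L M A ci ∧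
    ¬∃ b' : β → M, ∀ (i : ℕ) (φ : L.Formula (↥A ⊕ (β ⊕ γ))),
      φ.Realize (Sum.elim (Subtype.val : ↥A → M) (Sum.elim b c)) →
        φ.Realize (Sum.elim (Subtype.val : ↥A → M) (Sum.elim b' (ci i)))

/-- The partition relation `λ → (β)^{<ω}_γ`. -/
def ArrowRel (lam : Cardinal.{u}) (ot : Ordinal.{u}) (c : Cardinal.{u}) : Prop :=
  ∀ f : Finset lam.ord.ToType → c.ord.ToType,
    ∃ X : Set lam.ord.ToType, Nonempty (↥X ≃o ot.ToType) ∧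
      ∀ s t : Finset lam.ord.ToType, ↑s ⊆ X → ↑t ⊆ X → s.card = t.card → f s = f t

/-- The Lascar strong automorphism group over a set `A` of hyperimaginaries:
generated by pointwise stabilizers of small models fixing every element of `A`. -/
def lascarHypGrp (κ : Cardinal.{u}) (A : Set (Hyp L M)) : Subgroup (M ≃[L] M) :=
  Subgroup.closure {σ | ∃ N : L.ElementarySubstructure M,
    #(N : Set M) < κ ∧ autES L M N ⊆ autHyp L M A ∧ σ ∈ autES L M N}

/-- `b_F ⫝ᵇᵘ_{a_E} c_G` for ultraimaginaries. -/
def IndepU (κ : Cardinal.{u}) {α β γ : Type u} (E : IER L M α) (a : α → M)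
    (F : IER L M β) (b : β → M) (G : IER L M γ) (c : γ → M) : Prop :=
  IndepBU L M κ (autU L M E a) (autU L M E a ∩ autU L M F b)
    (autU L M E a ∩ autU L M G c)

/-!
Let `q` be a global coheir of `tp(a/N)`, obtained as the limit type of an ultrafilter on
`N`-tuples; since `N` is a model, `q` is `N`-invariant. Choose `g_i` for `i` below a cardinal
larger than the number of classes in the orbit of `a_E` over `N`, with `g_i ⊨ q` over
`N, a, σa` and all earlier `g_j`. Each `g_i` is conjugate to `a` over `N`, so by pigeonhole
`g_i E g_j` for some `i < j`. By invariance of `q`, `a g_j ≡ g_i g_j ≡ σa g_j`, so that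
`a E g_j E σa`.
-/

theorem WellFoundedLT.exists_seq_of_forall_exists {ι β : Type*} [LT ι] [WellFoundedLT ι]
    (P : ∀ i : ι, ({j // j < i} → β) → β → Prop) (h : ∀ i f, ∃ b, P i f b) :
    ∃ g : ι → β, ∀ i, P i (fun j => g j) (g i) := by
  choose pick hpick using h
  refine ⟨wellFounded_lt.fix fun i rec => pick i fun j => rec j j.2, fun i => ?_⟩
  rw [wellFounded_lt.fix_eq]
  exact hpick _ _

theorem exists_lt_rel_of_mk_lt {ι β : Type u} [LinearOrder ι] {r : β → β → Prop}
    (hr : Equivalence r) {S : Set β} (hS : #S < #ι) (g : ι → β)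
    (hg : ∀ i, ∃ s ∈ S, r (g i) s) : ∃ i j, i < j ∧ r (g i) (g j) := by
  choose s hsS hs using hg
  obtain ⟨i, j, hsij, hne⟩ := Function.not_injective_iff.1 fun hinj =>
    (mk_le_of_injective (f := fun i => (⟨s i, hsS i⟩ : S)) hinj).not_gt hS
  rw [Subtype.mk.injEq] at hsij
  have hgij : r (g i) (g j) := hr.trans (hs i) (hsij ▸ hr.symm (hs j))
  rcases hne.lt_or_gt with h | h
  · exact ⟨i, j, h, hgij⟩
  · exact ⟨j, i, h, hr.symm hgij⟩

theorem mk_sum_lt {κ : Cardinal.{u}} (hκ : ℵ₀ ≤ κ) {A B : Type u} (hA : #A < κ)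
    (hB : #B < κ) : #(A ⊕ B) < κ := by
  simpa using add_lt_of_lt hκ hA hB

theorem mk_prod_lt {κ : Cardinal.{u}} (hκ : ℵ₀ ≤ κ) {A B : Type u} (hA : #A < κ)
    (hB : #B < κ) : #(A × B) < κ := by
  simpa using mul_lt_of_lt hκ hA hB

section Types

variable {L M} {α : Type u}

open Language in
theorem sameType_comp_of_mem_autSet {A : Set M} {σ : M ≃[L] M} (hσ : σ ∈ autSet L M A)
    (a : α → M) :
    SameType L M (Sum.elim (Subtype.val : A → M) a) (Sum.elim Subtype.val (⇑σ ∘ a)) := by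
  intro φ
  have hfix : ⇑σ ∘ Sum.elim (Subtype.val : A → M) a = Sum.elim Subtype.val (⇑σ ∘ a) := by
    ext (x | j)
    exacts [hσ x.1 x.2, rfl]
  rw [← hfix, StrongHomClass.realize_formula]

theorem Homog.exists_mem_autSet_comp_eq {κ : Cardinal.{u}} (hhom : Homog L M κ)
    (hκ : ℵ₀ ≤ κ) {A : Set M} (hA : #A < κ) (hα : #α < κ) {a b : α → M}
    (hab : SameType L M (Sum.elim (Subtype.val : A → M) a) (Sum.elim Subtype.val b)) :
    ∃ σ ∈ autSet L M A, ⇑σ ∘ a = b := by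
  obtain ⟨σ, hσ⟩ := hhom _ _ _ (mk_sum_lt hκ hA hα) hab
  exact ⟨σ, fun x hx => hσ (Sum.inl ⟨x, hx⟩), funext fun j => hσ (Sum.inr j)⟩

end Types

section Coheir

open Language

variable {L M} (N : L.ElementarySubstructure M) {α γ : Type u}

def solutionsIn (e : γ → M) (ψ : L.Formula (γ ⊕ α)) : Set (α → N) :=
  {c | ψ.Realize (Sum.elim e fun j => (c j : M))}

/-- The restriction to the parameters `e` of the global type `lim_U tp(c/𝕄)`, which is finitely
satisfiable in `N`. -/
def coheirType (U : Ultrafilter (α → N)) (e : γ → M) : Set (L.Formula (γ ⊕ α)) :=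
  {ψ | solutionsIn N e ψ ∈ U}

def RealizesCoheir (U : Ultrafilter (α → N)) (e : γ → M) (b : α → M) : Prop :=
  ∀ ψ ∈ coheirType N U e, ψ.Realize (Sum.elim e b)

variable {N} {U : Ultrafilter (α → N)}

theorem not_mem_coheirType {e : γ → M} {ψ : L.Formula (γ ⊕ α)} :
    ψ.not ∈ coheirType N U e ↔ ψ ∉ coheirType N U e :=
  Ultrafilter.compl_mem_iff_notMem

theorem RealizesCoheir.realize_iff {e : γ → M} {b : α → M} (h : RealizesCoheir N U e b)
    (ψ : L.Formula (γ ⊕ α)) : ψ.Realize (Sum.elim e b) ↔ ψ ∈ coheirType N U e :=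
  ⟨fun hψ => by_contra fun hn => Formula.realize_not.1 (h _ (not_mem_coheirType.2 hn)) hψ,
    h ψ⟩

theorem realizesCoheir_of_realize_imp_mem {e : γ → M} {b : α → M}
    (h : ∀ ψ : L.Formula (γ ⊕ α), ψ.Realize (Sum.elim e b) → ψ ∈ coheirType N U e) :
    RealizesCoheir N U e b :=
  fun _ hψ => by_contra fun hn => not_mem_coheirType.1 (h _ (Formula.realize_not.2 hn)) hψ

theorem RealizesCoheir.restrict {γ' : Type u} {e : γ → M} {e' : γ' → M} {b : α → M}
    (h : RealizesCoheir N U e b) (r : γ' → γ) (he : ∀ x, e (r x) = e' x) :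
    RealizesCoheir N U e' b := by
  obtain rfl : e ∘ r = e' := funext he
  intro ψ hψ
  have hrelabel : ∀ x : α → M,
      (ψ.relabel (Sum.map r id)).Realize (Sum.elim e x) ↔ ψ.Realize (Sum.elim (e ∘ r) x) := by
    intro x
    rw [Formula.realize_relabel, Sum.elim_comp_map, Function.comp_id]
  exact (hrelabel b).1 (h _ (by simpa [coheirType, solutionsIn, hrelabel] using hψ))

theorem RealizesCoheir.sameType {e e' : γ → M} {b b' : α → M} (hb : RealizesCoheir N U e b)
    (hb' : RealizesCoheir N U e' b') (he : coheirType N U e = coheirType N U e') :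
    SameType L M (Sum.elim e b) (Sum.elim e' b') := fun ψ => by
  rw [hb.realize_iff, hb'.realize_iff, he]

theorem coheirType_eq_of_sameType {e e' : γ → M}
    (hee' : SameType L M (Sum.elim (Subtype.val : N → M) e) (Sum.elim Subtype.val e')) :
    coheirType N U (Sum.elim (Subtype.val : N → M) e) =
      coheirType N U (Sum.elim (Subtype.val : N → M) e') := by
  have hparam : ∀ (ψ : L.Formula ((N ⊕ γ) ⊕ α)) (e : γ → M) (c : α → N),
      c ∈ solutionsIn N (Sum.elim Subtype.val e) ψ ↔
        (ψ.relabel (Sum.elim id fun j => Sum.inl (c j))).Realize (Sum.elim Subtype.val e) := by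
    intro ψ e c
    rw [Formula.realize_relabel, Sum.comp_elim, Function.comp_id]
    rfl
  ext ψ
  show solutionsIn N _ ψ ∈ U ↔ solutionsIn N _ ψ ∈ U
  congr! 1
  ext c
  rw [hparam, hparam, hee']

end Coheir

section Existence

open Language Filter

variable {L M} (N : L.ElementarySubstructure M) {α γ : Type u}

theorem exists_realize_coe_of_realize {a : α → M} (ψ : L.Formula (N ⊕ α))
    (h : ψ.Realize (Sum.elim Subtype.val a)) :
    ∃ c : α → N, ψ.Realize (Sum.elim Subtype.val fun j => (c j : M)) := by
  classical
  let T : Set α := Sum.inr ⁻¹' (ψ.freeVarFinset : Set (N ⊕ α))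
  have : Finite T :=
    (ψ.freeVarFinset.finite_toSet.preimage Sum.inr_injective.injOn).to_subtype
  let θ : L.Formula (N ⊕ T) := ψ.restrictFreeVar fun x => match x with
    | ⟨Sum.inl n, _⟩ => Sum.inl n
    | ⟨Sum.inr j, hj⟩ => Sum.inr ⟨j, hj⟩
  have hθ : ∀ (v : N → M) (x : α → M),
      θ.Realize (Sum.elim v (x ∘ Subtype.val)) ↔ ψ.Realize (Sum.elim v x) :=
    fun v x => BoundedFormula.realize_restrictFreeVar _ (by rintro ⟨_ | _, _⟩ <;> rfl)
  have hM : (θ.iExs T).Realize (Subtype.val : N → M) :=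
    Formula.realize_iExs.2 ⟨a ∘ Subtype.val, (hθ _ _).2 h⟩
  obtain ⟨w, hw⟩ := Formula.realize_iExs.1 ((N.subtype.map_formula _ id).1 hM)
  let c : α → N := Function.extend Subtype.val w fun j =>
    haveI : Nonempty M := ⟨a j⟩
    Classical.arbitrary N
  have hc : c ∘ Subtype.val = w := Function.extend_comp Subtype.val_injective _ _
  have hw' := (N.subtype.map_formula _ _).2 hw
  rw [Sum.comp_elim, ← hc] at hw'
  exact ⟨c, (hθ _ _).1 hw'⟩

theorem exists_realizesCoheir_subtype_val (a : α → M) :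
    ∃ U : Ultrafilter (α → N), RealizesCoheir N U (Subtype.val : N → M) a := by
  let tp := {ψ : L.Formula (N ⊕ α) // ψ.Realize (Sum.elim Subtype.val a)}
  let F : Filter (α → N) := ⨅ ψ : tp, 𝓟 (solutionsIn N Subtype.val ψ.1)
  have : Nonempty tp := ⟨⟨⊤, Formula.realize_top.2 trivial⟩⟩
  have : F.NeBot := by
    refine iInf_neBot_of_directed' (fun ψ₁ ψ₂ => ?_) fun ψ => ?_
    · refine ⟨⟨ψ₁.1 ⊓ ψ₂.1, Formula.realize_inf.2 ⟨ψ₁.2, ψ₂.2⟩⟩, ?_, ?_⟩ <;>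
        refine principal_mono.2 fun c hc => ?_
      exacts [(Formula.realize_inf.1 hc).1, (Formula.realize_inf.1 hc).2]
    · obtain ⟨c, hc⟩ := exists_realize_coe_of_realize N ψ.1 ψ.2
      exact principal_neBot_iff.2 ⟨c, hc⟩
  refine ⟨Ultrafilter.of F, realizesCoheir_of_realize_imp_mem fun ψ hψ => ?_⟩
  exact Ultrafilter.of_le F (mem_iInf_of_mem ⟨ψ, hψ⟩ (mem_principal_self _))

theorem Saturated.exists_realizesCoheir {κ : Cardinal.{u}} (hsat : Saturated L M κ)
    (hγ : #γ < κ) (hα : #α < κ) (U : Ultrafilter (α → N)) (e : γ → M) :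
    ∃ b, RealizesCoheir N U e b := by
  refine hsat γ α hγ hα e (coheirType N U e) fun s hs => ?_
  obtain ⟨c, hc⟩ := U.nonempty_of_mem ((biInter_finset_mem s).2 hs)
  exact ⟨fun j => c j, fun ψ hψ => Set.mem_iInter₂.1 hc ψ hψ⟩

end Existence

variable {L M} in
theorem IER.rel_iff_of_realizesCoheir {N : L.ElementarySubstructure M} {α : Type u}
    (E : IER L M α) {U : Ultrafilter (α → N)} {a a' b : α → M}
    (haa' : SameType L M (Sum.elim (Subtype.val : N → M) a) (Sum.elim Subtype.val a'))
    (hb : RealizesCoheir N U (Sum.elim (Subtype.val : N → M) a) b)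
    (hb' : RealizesCoheir N U (Sum.elim (Subtype.val : N → M) a') b) :
    E.rel a b ↔ E.rel a' b := by
  have h := (hb.sameType hb' (coheirType_eq_of_sameType haa')).comp L M (Sum.map Sum.inr id)
  simp only [Sum.elim_comp_map, Sum.elim_comp_inr, Function.comp_id] at h
  exact E.invariant _ _ _ _ h

variable {L M} in
theorem IER.rel_of_realizesCoheir {N : L.ElementarySubstructure M} {α : Type u}
    (E : IER L M α) {U : Ultrafilter (α → N)} {a a' c d : α → M}
    (hac : SameType L M (Sum.elim (Subtype.val : N → M) a) (Sum.elim Subtype.val c))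
    (ha'c : SameType L M (Sum.elim (Subtype.val : N → M) a') (Sum.elim Subtype.val c))
    (hda : RealizesCoheir N U (Sum.elim (Subtype.val : N → M) a) d)
    (hda' : RealizesCoheir N U (Sum.elim (Subtype.val : N → M) a') d)
    (hdc : RealizesCoheir N U (Sum.elim (Subtype.val : N → M) c) d) (hcd : E.rel c d) :
    E.rel a a' :=
  E.equiv.trans ((E.rel_iff_of_realizesCoheir hac hda hdc).2 hcd)
    (E.equiv.symm ((E.rel_iff_of_realizesCoheir ha'c hda' hdc).2 hcd))

/-- If an ultraimaginary `a_E` is bounded over a small elementary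
submodel `N` of the monster, then it is definable over `N` (every automorphism
fixing `N` pointwise fixes `a_E`). -/
theorem statement_0 (L : FirstOrder.Language.{u, u}) (M : Type u) [L.Structure M]
    (κbar : Cardinal.{u}) (_mon : Monster L M κbar)
    (N : L.ElementarySubstructure M) (hN : #(N : Set M) < κbar)
    {α : Type u} (hα : #α < κbar) (E : IER L M α) (a : α → M)
    (hbdd : BddU L M κbar (autSet L M (N : Set M)) E a) :
    ∀ σ ∈ autSet L M (N : Set M), E.rel a (⇑σ ∘ a) := by
  intro σ hσ
  obtain ⟨S, hS, hcover⟩ := hbdd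
  have hκ : ℵ₀ ≤ κbar := _mon.aleph0_lt.le
  let ι := (Order.succ #S).ord.ToType
  have hSι : #S < #ι := by simp [ι]
  have hικ : #ι < κbar := by
    rw [mk_ord_toType]
    exact (Order.succ_le_of_lt (cantor _)).trans_lt (_mon.strongLimit _ hS)
  obtain ⟨U, hU⟩ := exists_realizesCoheir_subtype_val N a
  let e := Sum.elim (Subtype.val : N → M) (Sum.elim a (⇑σ ∘ a))
  obtain ⟨g, hg⟩ := WellFoundedLT.exists_seq_of_forall_exists (ι := ι)
    (fun i f => RealizesCoheir N U (Sum.elim e fun p : {j // j < i} × α => f p.1 p.2))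
    fun i _ => _mon.saturated.exists_realizesCoheir N
      (mk_sum_lt hκ (mk_sum_lt hκ hN (mk_sum_lt hκ hα hα))
        (mk_prod_lt hκ ((mk_subtype_le _).trans_lt hικ) hα)) hα U _
  have hga : ∀ i, SameType L M (Sum.elim (Subtype.val : N → M) a) (Sum.elim Subtype.val (g i)) :=
    fun i => hU.sameType ((hg i).restrict (Sum.inl ∘ Sum.inl) fun _ => rfl) rfl
  obtain ⟨i, j, hij, hgij⟩ := exists_lt_rel_of_mk_lt E.equiv hSι g fun i => by
    obtain ⟨τ, hτ, hτa⟩ := _mon.homog.exists_mem_autSet_comp_eq hκ hN hα (hga i)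
    exact hτa ▸ hcover τ hτ
  exact E.rel_of_realizesCoheir (hga i)
    (fun φ => ((sameType_comp_of_mem_autSet hσ a) φ).symm.trans (hga i φ))
    ((hg j).restrict (Sum.elim (Sum.inl ∘ Sum.inl) (Sum.inl ∘ Sum.inr ∘ Sum.inl))
      (by rintro (_ | _) <;> rfl))
    ((hg j).restrict (Sum.elim (Sum.inl ∘ Sum.inl) (Sum.inl ∘ Sum.inr ∘ Sum.inr))
      (by rintro (_ | _) <;> rfl))
    ((hg j).restrict (Sum.elim (Sum.inl ∘ Sum.inl) fun y => Sum.inr (⟨i, hij⟩, y))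
      (by rintro (_ | _) <;> rfl))
    hgij

end BddUltra
end

section
/- For any ultraimaginaries a_E and b_F, the following are equivalent: (1) b_F ∉ bddᵘ(a_E); (2) there is an a-indiscernible sequence (b_i)_{i<ω} such that b_0 ≡_{a_E} b (i.e., σ·b = b_0 for some σ ∈ Aut(𝕄/a_E)) and ¬(b_i F b_j) for all i < j < ω; (3) the orbit Aut(𝕄/a_E)·b_F has cardinality greater than 2^{|ab|+|T|}. -/
/-!
The boundedness of `b_F` over `a_E` means exactly that its orbit under `Aut(𝕄/a_E)` is small, and
`2^(|ab|+|T|)` is small, so it suffices to show (2) ⇒ (orbit not small) and (3) ⇒ (2).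

If `(bᵢ)` is an `a`-indiscernible sequence with `¬ bᵢ F bⱼ` and `b₀ ≡_{a_E} b`, compactness
stretches it to any small length, and homogeneity makes every term a conjugate of `b` over `a_E`.

Conversely, take a model `N ⊇ a` of size at most `|a| + |T|`. There are at most `2^(|ab|+|T|)`
types over `N`, so two `F`-inequivalent conjugates `d, d'` of `b` over `a_E` have the same type
over `N`. Choose an ultrafilter `D` on tuples from `N` whose average type over `N` is `tp(d/N)`
(possible as `N` is a model) and a coheir sequence `(eᵢ)` in `Av(D)` over `N d d'`. Both
`d, e₀, e₁, …` and `d', e₀, e₁, …` are coheir sequences, hence `N`-indiscernible, so `e₀ F e₁`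
would give `d F e₀ F d'`. Thus `(eᵢ)` is the required sequence.
-/

open FirstOrder Cardinal

universe u v w

namespace BddUltra

variable (L : FirstOrder.Language.{u, u}) (M : Type u) [L.Structure M]

section Types

variable {L : FirstOrder.Language.{u, u}} {M : Type u} [L.Structure M]

theorem sameType_of_forall_realize_imp {γ : Type v} {x y : γ → M}
    (h : ∀ φ : L.Formula γ, φ.Realize x → φ.Realize y) : SameType L M x y := fun φ =>
  ⟨h φ, fun hy => by_contra fun hx => Language.Formula.realize_not.mp (h φ.not
    (Language.Formula.realize_not.mpr hx)) hy⟩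

theorem sameType_comp_aut (σ : M ≃[L] M) {γ : Type v} (x : γ → M) :
    SameType L M x (⇑σ ∘ x) := fun φ =>
  (Language.StrongHomClass.realize_formula σ φ).symm

theorem sameTypeOver_iff {A : Set M} {γ : Type v} {x y : γ → M} :
    SameTypeOver L M A x y ↔
      SameType L M (Sum.elim (Subtype.val : A → M) x) (Sum.elim (Subtype.val : A → M) y) :=
  Iff.rfl

namespace SameTypeOver

variable {A : Set M} {γ : Type v} {x y z : γ → M}

theorem symm (h : SameTypeOver L M A x y) : SameTypeOver L M A y x := fun φ => (h φ).symm

theorem trans (h : SameTypeOver L M A x y) (h' : SameTypeOver L M A y z) :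
    SameTypeOver L M A x z := fun φ => (h φ).trans (h' φ)

theorem comp {δ : Type w} (h : SameTypeOver L M A x y) (g : δ → γ) :
    SameTypeOver L M A (x ∘ g) (y ∘ g) := by
  simpa only [sameTypeOver_iff, Sum.elim_comp_map, Function.comp_id] using
    SameType.comp L M (sameTypeOver_iff.mp h) (Sum.map id g)

theorem mono {B : Set M} (hAB : A ⊆ B) (h : SameTypeOver L M B x y) : SameTypeOver L M A x y := by
  simpa only [sameTypeOver_iff, Sum.elim_comp_map, Function.comp_id, Set.val_comp_inclusion] using
    SameType.comp L M (sameTypeOver_iff.mp h) (Sum.map (Set.inclusion hAB) id)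

theorem sameType (h : SameTypeOver L M A x y) : SameType L M x y := by
  simpa only [Sum.elim_comp_inr] using SameType.comp L M (sameTypeOver_iff.mp h) Sum.inr

end SameTypeOver

theorem IER.rel_iff_of_sameTypeOver {β : Type u} (F : IER L M β) {A : Set M} {x y x' y' : β → M}
    (h : SameTypeOver L M A (Sum.elim x y) (Sum.elim x' y')) : F.rel x y ↔ F.rel x' y' :=
  F.invariant _ _ _ _ h.sameType

namespace IndiscOver

variable {A : Set M} {β : Type w}

theorem mono {ι : Type v} [Preorder ι] {f : ι → β → M} {B : Set M} (hAB : A ⊆ B)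
    (h : IndiscOver L M B f) : IndiscOver L M A f := fun n s t hs ht =>
  (h n s t hs ht).mono hAB

theorem comp_strictMono {ι : Type v} {ι' : Type*} [Preorder ι] [Preorder ι'] {f : ι → β → M}
    (h : IndiscOver L M A f) {u : ι' → ι} (hu : StrictMono u) : IndiscOver L M A (f ∘ u) :=
  fun n s t hs ht => h n (u ∘ s) (u ∘ t) (hu.comp hs) (hu.comp ht)

variable {f : ℕ → β → M}

theorem sameTypeOver_pair (h : IndiscOver L M A f) {i j k l : ℕ} (hij : i < j) (hkl : k < l) :
    SameTypeOver L M A (Sum.elim (f i) (f j)) (Sum.elim (f k) (f l)) := by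
  have hmono : ∀ {p q : ℕ}, p < q → StrictMono ![p, q] := fun hpq => by
    simpa [Fin.strictMono_iff_lt_succ] using hpq
  have hflat : ∀ s : Fin 2 → ℕ, flatten M f s ∘ Sum.elim ((0 : Fin 2), ·) ((1 : Fin 2), ·) =
      Sum.elim (f (s 0)) (f (s 1)) := fun s => funext (Sum.rec (fun _ => rfl) fun _ => rfl)
  have := (h 2 ![i, j] ![k, l] (hmono hij) (hmono hkl)).comp
    (Sum.elim ((0 : Fin 2), ·) ((1 : Fin 2), ·))
  rwa [hflat, hflat] at this

theorem sameTypeOver_single (h : IndiscOver L M A f) (i j : ℕ) :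
    SameTypeOver L M A (f i) (f j) := by
  simpa only [Sum.elim_comp_inl] using
    (h.sameTypeOver_pair (Nat.lt_succ_self i) (Nat.lt_succ_self j)).comp Sum.inl

end IndiscOver

end Types

theorem mk_sum_lt_s1 {κ : Cardinal.{u}} (hκ : ℵ₀ ≤ κ) {α β : Type u} (hα : #α < κ) (hβ : #β < κ) :
    #(α ⊕ β) < κ := by
  simpa only [mk_sum, lift_id] using Cardinal.add_lt_of_lt hκ hα hβ

theorem mk_prod_lt_s1 {κ : Cardinal.{u}} (hκ : ℵ₀ ≤ κ) {α β : Type u} (hα : #α < κ) (hβ : #β < κ) :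
    #(α × β) < κ := by
  simpa only [mk_prod, lift_id] using Cardinal.mul_lt_of_lt hκ hα hβ

section Automorphisms

variable {L : FirstOrder.Language.{u, u}} {M : Type u} [L.Structure M]

theorem one_mem_autU {α : Type u} (E : IER L M α) (a : α → M) : 1 ∈ autU L M E a :=
  E.equiv.refl a

theorem mul_mem_autU {α : Type u} {E : IER L M α} {a : α → M} {τ σ : M ≃[L] M}
    (hτ : ∀ i, τ (a i) = a i) (hσ : σ ∈ autU L M E a) : τ * σ ∈ autU L M E a := by
  have hτa : ⇑τ ∘ a = a := funext hτ
  have := sameType_comp_aut τ (Sum.elim a (⇑σ ∘ a))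
  rw [Sum.comp_elim, hτa] at this
  exact (E.invariant _ _ _ _ this).mp hσ

variable {X : Set (M ≃[L] M)} {β : Type u} {F : IER L M β} {b : β → M}

theorem bddU_iff_orbitCard_lt {κ : Cardinal.{u}} : BddU L M κ X F b ↔ orbitCard L M X F b < κ := by
  constructor
  · rintro ⟨S, hS, hcover⟩
    refine lt_of_le_of_lt ((Cardinal.mk_le_mk_of_subset (t := Quotient.mk F.setoid '' S) ?_).trans
      Cardinal.mk_image_le) hS
    rintro _ ⟨σ, rfl⟩
    obtain ⟨s, hs, hσs⟩ := hcover σ.1 σ.2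
    exact ⟨s, hs, (Quotient.sound hσs).symm⟩
  · intro h
    refine ⟨Quotient.out '' Set.range fun σ : X => Quotient.mk F.setoid (⇑σ.1 ∘ b),
      Cardinal.mk_image_le.trans_lt h, fun σ hσ => ⟨_, ⟨_, ⟨⟨σ, hσ⟩, rfl⟩, rfl⟩, ?_⟩⟩
    exact F.equiv.symm (Quotient.mk_out (s := F.setoid) _)

theorem le_orbitCard_of_pairwise_not_rel {ι : Type u} (c : ι → β → M)
    (hc : ∀ x, ∃ σ ∈ X, ⇑σ ∘ b = c x) (hF : Pairwise fun x y => ¬F.rel (c x) (c y)) :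
    #ι ≤ orbitCard L M X F b := by
  choose σ hσX hσ using hc
  refine Cardinal.mk_le_of_injective (f := fun x => ⟨Quotient.mk F.setoid (c x),
    ⟨σ x, hσX x⟩, by simp only [hσ x]⟩) fun x y hxy => ?_
  by_contra hne
  exact hF hne (Quotient.exact (congrArg Subtype.val hxy))

theorem one_le_orbitCard {α : Type u} (E : IER L M α) (a : α → M) :
    1 ≤ orbitCard L M (autU L M E a) F b := by
  simpa using le_orbitCard_of_pairwise_not_rel (ι := PUnit) (fun _ => b)
    (fun _ => ⟨1, one_mem_autU E a, rfl⟩) (Subsingleton.pairwise)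

end Automorphisms

namespace Monster

variable {L : FirstOrder.Language.{u, u}} {M : Type u} [L.Structure M] {κbar : Cardinal.{u}}
  (mon : Monster L M κbar)
include mon

theorem cardT_lt : cardT L < κbar :=
  Cardinal.add_lt_of_lt mon.isRegular.aleph0_le mon.lang_lt mon.aleph0_lt

theorem exists_aut_of_sameTypeOver {A : Set M} (hA : #A < κbar) {β : Type u} (hβ : #β < κbar)
    {x y : β → M} (h : SameTypeOver L M A x y) :
    ∃ τ : M ≃[L] M, (∀ z ∈ A, τ z = z) ∧ ∀ i, τ (x i) = y i := by
  obtain ⟨τ, hτ⟩ := mon.homog (A ⊕ β) _ _ (mk_sum_lt_s1 mon.isRegular.aleph0_le hA hβ) h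
  exact ⟨τ, fun z hz => hτ (Sum.inl ⟨z, hz⟩), fun i => hτ (Sum.inr i)⟩

theorem exists_pairwise_sameTypeOver {A : Set M} (hA : #A < κbar) {β : Type u} (hβ : #β < κbar)
    {ι : Type u} [LinearOrder ι] (hι : #ι < κbar) {f : ℕ → β → M} (hf : IndiscOver L M A f) :
    ∃ c : ι → β → M, ∀ x y, x < y →
      SameTypeOver L M A (Sum.elim (f 0) (f 1)) (Sum.elim (c x) (c y)) := by
  classical
  let pairVar (x y : ι) : β ⊕ β → ι × β := Sum.elim (x, ·) (y, ·)
  have realize_pairVar : ∀ x y (φ : L.Formula (A ⊕ (β ⊕ β))) (c : ι × β → M),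
      (φ.relabel (Sum.map id (pairVar x y))).Realize (Sum.elim Subtype.val c) ↔
        φ.Realize (Sum.elim Subtype.val (Sum.elim (fun w => c (x, w)) (fun w => c (y, w)))) := by
    intro x y φ c
    rw [Language.Formula.realize_relabel, Sum.elim_comp_map, Function.comp_id]
    exact iff_of_eq (congrArg _ (congrArg _ (funext (Sum.rec (fun _ => rfl) fun _ => rfl))))
  let p : Set (L.Formula (A ⊕ (ι × β))) := {ψ | ∃ x y, x < y ∧ ∃ φ : L.Formula (A ⊕ (β ⊕ β)),
    φ.Realize (Sum.elim Subtype.val (Sum.elim (f 0) (f 1))) ∧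
      ψ = φ.relabel (Sum.map id (pairVar x y))}
  have hfin : ∀ s : Finset (L.Formula (A ⊕ (ι × β))), ↑s ⊆ p →
      ∃ c : ι × β → M, ∀ ψ ∈ s, ψ.Realize (Sum.elim Subtype.val c) := by
    intro s hs
    rcases isEmpty_or_nonempty ι with _ | _
    · exact ⟨fun q => isEmptyElim q.1, fun ψ h => isEmptyElim (hs h).choose⟩
    choose! x y hxy φ hφ hψ using fun ψ (h : ψ ∈ s) => hs h
    -- a finite configuration of pairs embeds into `ℕ` via the rank in the set of endpoints
    let K : Finset ι := s.image x ∪ s.image y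
    let rank (z : ι) : ℕ := (K.filter (· < z)).card
    have hrank : ∀ ψ ∈ s, rank (x ψ) < rank (y ψ) := by
      intro ψ h
      refine Finset.card_lt_card (Finset.ssubset_iff_of_subset
        (Finset.monotone_filter_right K fun v _ (hv : v < x ψ) => hv.trans (hxy ψ h)) |>.mpr ?_)
      exact ⟨x ψ, Finset.mem_filter.mpr ⟨Finset.mem_union_left _ (Finset.mem_image_of_mem x h),
        hxy ψ h⟩, by simp⟩
    refine ⟨fun q => f (rank q.1) q.2, fun ψ h => ?_⟩
    rw [hψ ψ h, realize_pairVar]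
    exact (hf.sameTypeOver_pair Nat.zero_lt_one (hrank ψ h) (φ ψ)).mp (hφ ψ h)
  obtain ⟨c, hc⟩ := mon.saturated A (ι × β) hA (mk_prod_lt_s1 mon.isRegular.aleph0_le hι hβ)
    Subtype.val p hfin
  refine ⟨fun x w => c (x, w), fun x y hxy => sameType_of_forall_realize_imp fun φ hφ => ?_⟩
  exact (realize_pairVar x y φ c).mp (hc _ ⟨x, y, hxy, φ, hφ, rfl⟩)

theorem le_orbitCard_of_exists_indiscOver {α β : Type u} (hα : #α < κbar) (hβ : #β < κbar)
    {E : IER L M α} {a : α → M} {F : IER L M β} {b : β → M}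
    (h : ∃ bi : ℕ → β → M, IndiscOver L M (Set.range a) bi ∧
      (∃ σ ∈ autU L M E a, ∀ i, σ (b i) = bi 0 i) ∧ ∀ i j : ℕ, i < j → ¬F.rel (bi i) (bi j)) :
    κbar ≤ orbitCard L M (autU L M E a) F b := by
  obtain ⟨f, hf, ⟨σ, hσ, hσb⟩, hF⟩ := h
  set O := orbitCard L M (autU L M E a) F b
  by_contra! hO
  have hA : #(Set.range a) < κbar := Cardinal.mk_range_le.trans_lt hα
  let ι := (Order.succ O).ord.ToType
  have hι : #ι = Order.succ O := by simp [ι]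
  have hικ : #ι < κbar :=
    hι ▸ (Order.succ_le_of_lt (Cardinal.cantor O)).trans_lt (mon.strongLimit O hO)
  have : Nontrivial ι := Cardinal.one_lt_iff_nontrivial.mp
    (hι ▸ Order.lt_succ_iff.mpr (one_le_orbitCard E a))
  obtain ⟨c, hc⟩ := mon.exists_pairwise_sameTypeOver hA hβ hικ hf
  have hsingle : ∀ x, SameTypeOver L M (Set.range a) (f 0) (c x) := by
    intro x
    obtain ⟨y, hyx⟩ := exists_ne x
    rcases hyx.lt_or_gt with hlt | hlt
    · simpa only [Sum.elim_comp_inr] using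
        (hf.sameTypeOver_single 0 1).trans ((hc y x hlt).comp Sum.inr)
    · simpa only [Sum.elim_comp_inl] using (hc x y hlt).comp Sum.inl
  have hconj : ∀ x, ∃ τ ∈ autU L M E a, ⇑τ ∘ b = c x := by
    intro x
    obtain ⟨τ, hτa, hτ⟩ := mon.exists_aut_of_sameTypeOver hA hβ (hsingle x)
    exact ⟨τ * σ, mul_mem_autU (fun i => hτa _ ⟨i, rfl⟩) hσ,
      funext fun i => (congrArg τ (hσb i)).trans (hτ i)⟩
  have hnot_rel : ∀ x y, x < y → ¬F.rel (c x) (c y) := fun x y hxy =>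
    (F.rel_iff_of_sameTypeOver (hc x y hxy)).not.mp (hF 0 1 Nat.zero_lt_one)
  have hpair : Pairwise fun x y => ¬F.rel (c x) (c y) := by
    intro x y hxy
    rcases hxy.lt_or_gt with hlt | hlt
    · exact hnot_rel x y hlt
    · exact fun h => hnot_rel y x hlt (F.equiv.symm h)
  exact (Order.lt_succ O).not_ge (hι ▸ le_orbitCard_of_pairwise_not_rel c hconj hpair)

end Monster

section Models

variable {L : FirstOrder.Language.{u, u}} {M : Type u} [L.Structure M]

theorem _root_.FirstOrder.Language.ElementarySubstructure.exists_realize_of_realize [Nonempty M]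
    (N : L.ElementarySubstructure M) {γ β : Type*} {φ : L.Formula (γ ⊕ β)} (c : γ → N)
    {d : β → M} (h : φ.Realize (Sum.elim (Subtype.val ∘ c) d)) :
    ∃ m : β → N, φ.Realize (Sum.elim (Subtype.val ∘ c) (Subtype.val ∘ m)) := by
  classical
  -- `φ` has finitely many free variables; quantify existentially over those among `β`.
  let V : Set (γ ⊕ β) := ↑φ.freeVarFinset
  let ψ : L.Formula V := φ.restrictFreeVar (Set.inclusion subset_rfl)
  let toParam (x : V) : γ ⊕ V := Sum.elim Sum.inl (fun _ => Sum.inr x) x.1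
  have hψ : ∀ (v : V → M) (w : γ ⊕ β → M), w ∘ Sum.inl = Subtype.val ∘ c →
      (∀ z (hz : Sum.inr z ∈ V), v ⟨_, hz⟩ = w (Sum.inr z)) →
      ((ψ.relabel toParam).Realize (Sum.elim (Subtype.val ∘ c) v) ↔ φ.Realize w) := by
    intro v w hwc hvw
    rw [Language.Formula.realize_relabel]
    refine (iff_of_eq (congrArg ψ.Realize (funext fun x => ?_))).trans
      (Language.BoundedFormula.realize_restrictFreeVar' subset_rfl (v := w) (xs := default))
    rcases x with ⟨z | z, hz⟩
    · exact (congrFun hwc z).symm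
    · exact hvw z hz
  have hM : ((ψ.relabel toParam).iExs V).Realize (Subtype.val ∘ c) :=
    Language.Formula.realize_iExs.mpr
      ⟨fun x => Sum.elim (Subtype.val ∘ c) d x, (hψ _ _ rfl fun _ _ => rfl).mpr h⟩
  obtain ⟨i, hi⟩ := Language.Formula.realize_iExs.mp ((N.subtype.map_formula _ c).mp hM)
  have hiM := (N.subtype.map_formula _ _).mpr hi
  rw [Sum.comp_elim] at hiM
  exact ⟨fun z => if hz : Sum.inr z ∈ V then i ⟨_, hz⟩ else Classical.arbitrary N,
    (hψ _ _ rfl fun z hz => by simp [hz]).mp hiM⟩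

end Models

section Coheir

variable {L : FirstOrder.Language.{u, u}} {M : Type u} [L.Structure M] {A : Set M} {β : Type u}

def satTuples {γ : Type*} (c : γ → M) (φ : L.Formula ((A ⊕ γ) ⊕ β)) : Set (β → A) :=
  {m | φ.Realize (Sum.elim (Sum.elim Subtype.val c) (Subtype.val ∘ m))}

variable (L) in
/-- `e` realizes the average type `Av(D / A ∪ c)` of the ultrafilter `D` on `β`-tuples from `A`. -/
def RealizesAv (D : Ultrafilter (β → A)) {γ : Type*} (c : γ → M) (e : β → M) : Prop :=
  ∀ φ : L.Formula ((A ⊕ γ) ⊕ β), satTuples c φ ∈ D →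
    φ.Realize (Sum.elim (Sum.elim Subtype.val c) e)

variable (L) in
def IsCoheirSeq (D : Ultrafilter (β → A)) (v : ℕ → β → M) : Prop :=
  ∀ n, RealizesAv L D (flatten M v (Fin.val : Fin n → ℕ)) (v n)

variable {D : Ultrafilter (β → A)}

theorem satTuples_eq_of_sameTypeOver {γ : Type*} {c c' : γ → M} (h : SameTypeOver L M A c c')
    (φ : L.Formula ((A ⊕ γ) ⊕ β)) : satTuples c φ = satTuples c' φ := by
  ext m
  have key : ∀ c : γ → M, Sum.elim Subtype.val c ∘ Sum.elim id (Sum.inl ∘ m) =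
      Sum.elim (Sum.elim Subtype.val c) (Subtype.val ∘ m) := fun c =>
    funext (Sum.rec (fun _ => rfl) fun _ => rfl)
  show φ.Realize _ ↔ φ.Realize _
  simpa only [Language.Formula.realize_relabel, key] using
    h (φ.relabel (Sum.elim id (Sum.inl ∘ m)))

theorem satTuples_not {γ : Type*} (c : γ → M) (φ : L.Formula ((A ⊕ γ) ⊕ β)) :
    satTuples c φ.not = (satTuples c φ)ᶜ := by
  ext m
  exact Language.Formula.realize_not

namespace RealizesAv

variable {γ : Type*} {c : γ → M} {e : β → M}

theorem realize_iff (h : RealizesAv L D c e) (φ : L.Formula ((A ⊕ γ) ⊕ β)) :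
    φ.Realize (Sum.elim (Sum.elim Subtype.val c) e) ↔ satTuples c φ ∈ D := by
  refine ⟨fun hφ => by_contra fun hD => ?_, h φ⟩
  exact Language.Formula.realize_not.mp
    (h φ.not (satTuples_not c φ ▸ Ultrafilter.compl_mem_iff_notMem.mpr hD)) hφ

theorem comp (h : RealizesAv L D c e) {γ' : Type*} (j : γ' → γ) : RealizesAv L D (c ∘ j) e := by
  intro φ hφ
  have key : ∀ x : β → M,
      Sum.elim (Sum.elim (Subtype.val : A → M) c) x ∘ Sum.map (Sum.map id j) id =
        Sum.elim (Sum.elim Subtype.val (c ∘ j)) x := by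
    intro x
    simp only [Sum.elim_comp_map, Function.comp_id]
  have hsat : satTuples c (φ.relabel (Sum.map (Sum.map id j) id)) = satTuples (c ∘ j) φ := by
    ext m
    show (φ.relabel _).Realize _ ↔ φ.Realize _
    rw [Language.Formula.realize_relabel, key]
  have := h _ (hsat ▸ hφ)
  rwa [Language.Formula.realize_relabel, key] at this

theorem sameTypeOver {c' : γ → M} {e' : β → M} (h : RealizesAv L D c e)
    (h' : RealizesAv L D c' e') (hc : SameTypeOver L M A c c') :
    SameTypeOver L M A (Sum.elim c e) (Sum.elim c' e') := by
  have key : ∀ (c : γ → M) (e : β → M),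
      Sum.elim (Sum.elim Subtype.val c) e ∘ (Equiv.sumAssoc A γ β).symm =
        Sum.elim Subtype.val (Sum.elim c e) := fun c e =>
    funext (Sum.rec (fun _ => rfl) (Sum.rec (fun _ => rfl) fun _ => rfl))
  intro φ
  have := (h.realize_iff _).trans ((satTuples_eq_of_sameTypeOver hc _).symm ▸
    (h'.realize_iff (φ.relabel (Equiv.sumAssoc A γ β).symm)).symm)
  simpa only [Language.Formula.realize_relabel, key] using this

end RealizesAv

namespace IsCoheirSeq

variable {v : ℕ → β → M}

theorem sameTypeOver_flatten (hv : IsCoheirSeq L D v) :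
    ∀ {n} (s : Fin n → ℕ), StrictMono s →
      SameTypeOver L M A (flatten M v s) (flatten M v Fin.val)
  | 0, s, _ => by
    rw [Subsingleton.elim (flatten M v s) (flatten M v Fin.val)]
    exact fun _ => Iff.rfl
  | n + 1, s, hs => by
    let split : Fin (n + 1) × β → (Fin n × β) ⊕ β :=
      fun q => Fin.lastCases (Sum.inr q.2) (fun i => Sum.inl (i, q.2)) q.1
    have hsplit : ∀ t : Fin (n + 1) → ℕ,
        flatten M v t = Sum.elim (flatten M v (Fin.init t)) (v (t (Fin.last n))) ∘ split := by
      intro t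
      funext ⟨i, w⟩
      induction i using Fin.lastCases <;> simp [split, flatten, Fin.init]
    have hlast : RealizesAv L D (flatten M v (Fin.init s)) (v (s (Fin.last n))) :=
      (hv (s (Fin.last n))).comp fun q : Fin n × β =>
        ((⟨s q.1.castSucc, hs (Fin.castSucc_lt_last q.1)⟩ : Fin (s (Fin.last n))), q.2)
    have := (hlast.sameTypeOver (hv n)
      (sameTypeOver_flatten hv (Fin.init s) (hs.comp Fin.strictMono_castSucc))).comp split
    rw [hsplit s, hsplit Fin.val]
    exact this

theorem indiscOver (hv : IsCoheirSeq L D v) : IndiscOver L M A v := fun _ s t hs ht =>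
  (hv.sameTypeOver_flatten s hs).trans (hv.sameTypeOver_flatten t ht).symm

end IsCoheirSeq

theorem isCoheirSeq_cons {d : β → M} {e : ℕ → β → M}
    (hd : RealizesAv L D (Empty.elim : Empty → M) d)
    (he : ∀ n, RealizesAv L D (Sum.elim (flatten M e (Fin.val : Fin n → ℕ)) d) (e n)) :
    IsCoheirSeq L D (Stream'.cons d e)
  | 0 => by
    have := hd.comp fun q : Fin 0 × β => q.1.elim0
    rwa [Subsingleton.elim (Empty.elim ∘ _) (flatten M (Stream'.cons d e) Fin.val)] at this
  | n + 1 => by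
    let split : Fin (n + 1) × β → (Fin n × β) ⊕ β :=
      fun q => Fin.cases (Sum.inr q.2) (fun i => Sum.inl (i, q.2)) q.1
    have hsplit :
        flatten M (Stream'.cons d e) Fin.val = Sum.elim (flatten M e Fin.val) d ∘ split := by
      funext ⟨i, w⟩
      induction i using Fin.cases <;> rfl
    rw [hsplit]
    exact (he n).comp split

theorem exists_ultrafilter_realizesAv [Nonempty M] (N : L.ElementarySubstructure M) (d : β → M) :
    ∃ D : Ultrafilter (β → (N : Set M)), RealizesAv L D (Empty.elim : Empty → M) d := by
  let tp : Set (L.Formula (((N : Set M) ⊕ Empty) ⊕ β)) :=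
    {φ | φ.Realize (Sum.elim (Sum.elim Subtype.val Empty.elim) d)}
  let B : FilterBasis (β → (N : Set M)) :=
    { sets := satTuples Empty.elim '' tp
      nonempty := ⟨_, ⊤, Language.Formula.realize_top.mpr trivial, rfl⟩
      inter_sets := by
        rintro _ _ ⟨φ, hφ, rfl⟩ ⟨ψ, hψ, rfl⟩
        exact ⟨_, ⟨φ ⊓ ψ, Language.Formula.realize_inf.mpr ⟨hφ, hψ⟩, rfl⟩,
          fun m hm => Language.Formula.realize_inf.mp hm⟩ }
  have hparam : Subtype.val ∘ (Sum.elim id Empty.elim : (N : Set M) ⊕ Empty → N) =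
      Sum.elim Subtype.val Empty.elim := funext (Sum.rec (fun _ => rfl) (fun e => e.elim))
  have : B.filter.NeBot := by
    refine Filter.forall_mem_nonempty_iff_neBot.mp fun U hU => ?_
    obtain ⟨_, ⟨φ, hφ, rfl⟩, hU⟩ := B.mem_filter_iff.mp hU
    obtain ⟨m, hm⟩ := N.exists_realize_of_realize (Sum.elim id Empty.elim)
      (hparam ▸ hφ : φ.Realize (Sum.elim _ d))
    exact ⟨m, hU (show φ.Realize _ from hparam ▸ hm)⟩
  refine ⟨Ultrafilter.of B.filter, fun φ hφ => by_contra fun hn => ?_⟩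
  have hnot : satTuples Empty.elim φ.not ∈ Ultrafilter.of B.filter :=
    Ultrafilter.of_le _ (B.mem_filter_of_mem ⟨φ.not, Language.Formula.realize_not.mpr hn, rfl⟩)
  rw [satTuples_not] at hnot
  exact Ultrafilter.compl_notMem_iff.mpr hφ hnot

end Coheir

namespace Monster

variable {L : FirstOrder.Language.{u, u}} {M : Type u} [L.Structure M] {κbar : Cardinal.{u}}
  (mon : Monster L M κbar) {A : Set M} (hA : #A < κbar) {β : Type u} (hβ : #β < κbar)
  (D : Ultrafilter (β → A))
include mon hA hβ

theorem exists_realizesAv {γ : Type u} (hγ : #γ < κbar) (c : γ → M) :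
    ∃ e : β → M, RealizesAv L D c e := by
  refine mon.saturated (A ⊕ γ) β (mk_sum_lt_s1 mon.isRegular.aleph0_le hA hγ) hβ
    (Sum.elim Subtype.val c) {φ | satTuples c φ ∈ D} fun s hs => ?_
  obtain ⟨m, hm⟩ := Ultrafilter.nonempty_of_mem
    ((Filter.biInter_finset_mem (f := (D : Filter (β → A))) s).mpr fun φ hφ => hs hφ)
  exact ⟨Subtype.val ∘ m, fun φ hφ => Set.mem_iInter₂.mp hm φ hφ⟩

theorem exists_realizesAv_seq {γ : Type u} (hγ : #γ < κbar) (c : γ → M) :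
    ∃ e : ℕ → β → M,
      ∀ n, RealizesAv L D (Sum.elim (flatten M e (Fin.val : Fin n → ℕ)) c) (e n) := by
  have hfin : ∀ n, #(Fin n × β) < κbar := fun n => by
    rw [Cardinal.mk_prod, Cardinal.mk_fin, Cardinal.lift_natCast, Cardinal.lift_uzero]
    exact Cardinal.mul_lt_of_lt mon.isRegular.aleph0_le
      (Cardinal.natCast_lt_aleph0.trans_le mon.isRegular.aleph0_le) hβ
  have hnext : ∀ n (p : Fin n → β → M), ∃ x, RealizesAv L D (Sum.elim (flatten M p id) c) x :=
    fun n p => mon.exists_realizesAv hA hβ D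
      (mk_sum_lt_s1 mon.isRegular.aleph0_le (hfin n) hγ) _
  choose next hnext using hnext
  let e : ℕ → β → M := Nat.strongRec fun n prev => next n fun i => prev i i.isLt
  refine ⟨e, fun n => ?_⟩
  rw [show e n = next n fun i => e i from Nat.strongRec_eq _ n]
  exact hnext n fun i => e i

end Monster

section Counting

variable (L : FirstOrder.Language.{u, u}) (M : Type u) [L.Structure M]

theorem card_formula_le (γ : Type u) : #(L.Formula γ) ≤ #γ + cardT L := by
  refine (Cardinal.mk_le_of_injective (sigma_mk_injective (i := 0))).trans
    (Language.BoundedFormula.card_le.trans ?_)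
  simp only [lift_id, cardT]
  exact max_le (le_add_self.trans le_add_self) (by gcongr; exact le_self_add)

theorem exists_elementarySubstructure_superset_card_le (A : Set M) :
    ∃ N : L.ElementarySubstructure M, A ⊆ N ∧ #(N : Set M) ≤ #A + cardT L := by
  rcases le_or_gt (#A + cardT L) #M with h | h
  · obtain ⟨N, hAN, hN⟩ := Language.exists_elementarySubstructure_card_eq L A (#A + cardT L)
      (le_add_self.trans le_add_self) (by simp)
      (by simpa [cardT] using le_self_add.trans le_add_self) (by simpa using h)
    exact ⟨N, hAN, (by simpa using hN : #(N : Set M) = _).le⟩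
  · exact ⟨⊤, fun _ _ => trivial, (Cardinal.mk_subtype_le _).trans h.le⟩

variable {L M}

theorem exists_sameTypeOver_not_rel_of_lt_orbitCard {X : Set (M ≃[L] M)} {β : Type u}
    {F : IER L M β} {b : β → M} (A : Set M)
    (h : 2 ^ #(L.Formula (A ⊕ β)) < orbitCard L M X F b) :
    ∃ σ ∈ X, ∃ σ' ∈ X, ¬F.rel (⇑σ ∘ b) (⇑σ' ∘ b) ∧ SameTypeOver L M A (⇑σ ∘ b) (⇑σ' ∘ b) := by
  let O := Set.range fun σ : X => Quotient.mk F.setoid (⇑σ.1 ∘ b)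
  choose rep hrep using fun r : O => r.2
  let tp (r : O) : Set (L.Formula (A ⊕ β)) :=
    {φ | φ.Realize (Sum.elim Subtype.val (⇑(rep r).1 ∘ b))}
  have : ¬Function.Injective tp := fun hinj =>
    (h.trans_le ((Cardinal.mk_le_of_injective hinj).trans_eq (Cardinal.mk_set))).false
  obtain ⟨r, r', htp, hne⟩ := Function.not_injective_iff.mp this
  refine ⟨(rep r).1, (rep r).2, (rep r').1, (rep r').2, fun hF => hne (Subtype.ext ?_),
    fun φ => Set.ext_iff.mp htp φ⟩
  rw [← hrep r, ← hrep r']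
  exact Quotient.sound hF

end Counting

namespace Monster

variable {L : FirstOrder.Language.{u, u}} {M : Type u} [L.Structure M] {κbar : Cardinal.{u}}
  (mon : Monster L M κbar)
include mon

theorem exists_indiscOver_not_rel {N : L.ElementarySubstructure M} (hN : #(N : Set M) < κbar)
    {β : Type u} (hβ : #β < κbar) {F : IER L M β} {d d' : β → M} (hdd' : SameTypeOver L M N d d')
    (hF : ¬F.rel d d') :
    ∃ e : ℕ → β → M, IndiscOver L M N e ∧ SameTypeOver L M N d (e 0) ∧
      ∀ i j, i < j → ¬F.rel (e i) (e j) := by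
  rcases isEmpty_or_nonempty β with _ | _
  · exact (hF (Subsingleton.elim d d' ▸ F.equiv.refl d)).elim
  have : Nonempty M := ⟨d (Classical.arbitrary β)⟩
  obtain ⟨D, hD⟩ := exists_ultrafilter_realizesAv N d
  have hD' : RealizesAv L D (Empty.elim : Empty → M) d' := by
    have key : ∀ x : β → M, Sum.elim (Subtype.val : ↥(N : Set M) → M) x ∘
        Sum.elim (Sum.elim Sum.inl Empty.elim) Sum.inr =
          Sum.elim (Sum.elim (Subtype.val : ↥(N : Set M) → M) Empty.elim) x :=
      fun x => funext fun z => by rcases z with (z | z) | z <;> first | rfl | exact z.elim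
    have := SameType.comp L M hdd' (Sum.elim (Sum.elim Sum.inl Empty.elim) Sum.inr)
    rw [key, key] at this
    exact fun φ hφ => (this φ).mp (hD φ hφ)
  obtain ⟨e, he⟩ := mon.exists_realizesAv_seq hN hβ D
    (mk_sum_lt_s1 mon.isRegular.aleph0_le hβ hβ) (Sum.elim d d')
  have hI := (isCoheirSeq_cons hD fun n => by
    simpa only [Sum.elim_comp_map, Function.comp_id, Sum.elim_comp_inl] using
      (he n).comp (Sum.map id Sum.inl)).indiscOver
  have hI' := (isCoheirSeq_cons hD' fun n => by
    simpa only [Sum.elim_comp_map, Function.comp_id, Sum.elim_comp_inr] using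
      (he n).comp (Sum.map id Sum.inr)).indiscOver
  have he_indisc : IndiscOver L M N e := hI.comp_strictMono Order.succ_strictMono
  have hF01 : ¬F.rel (e 0) (e 1) := by
    intro h01
    have hd : F.rel d (e 0) :=
      (F.rel_iff_of_sameTypeOver (hI.sameTypeOver_pair Nat.zero_lt_one Nat.one_lt_two)).mpr h01
    have hd' : F.rel d' (e 0) :=
      (F.rel_iff_of_sameTypeOver (hI'.sameTypeOver_pair Nat.zero_lt_one Nat.one_lt_two)).mpr h01
    exact hF (F.equiv.trans hd (F.equiv.symm hd'))
  exact ⟨e, he_indisc, hI.sameTypeOver_single 0 1, fun i j hij h =>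
    hF01 ((F.rel_iff_of_sameTypeOver (he_indisc.sameTypeOver_pair hij Nat.zero_lt_one)).mp h)⟩

theorem exists_indiscOver_of_lt_orbitCard {α β : Type u} (hα : #α < κbar) (hβ : #β < κbar)
    {E : IER L M α} {a : α → M} {F : IER L M β} {b : β → M}
    (h : 2 ^ (#α + #β + cardT L) < orbitCard L M (autU L M E a) F b) :
    ∃ bi : ℕ → β → M, IndiscOver L M (Set.range a) bi ∧
      (∃ σ ∈ autU L M E a, ∀ i, σ (b i) = bi 0 i) ∧ ∀ i j : ℕ, i < j → ¬F.rel (bi i) (bi j) := by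
  obtain ⟨N, haN, hN⟩ := exists_elementarySubstructure_superset_card_le L M (Set.range a)
  have hNα : #(N : Set M) ≤ #α + cardT L := hN.trans (by gcongr; exact Cardinal.mk_range_le)
  have hcardT : ℵ₀ ≤ cardT L := le_add_self
  have hformulas : #(L.Formula ((N : Set M) ⊕ β)) ≤ #α + #β + cardT L := calc
    _ ≤ #(N : Set M) + #β + cardT L := by
      simpa only [Cardinal.mk_sum, Cardinal.lift_id] using card_formula_le L ((N : Set M) ⊕ β)
    _ ≤ #α + cardT L + #β + cardT L := by gcongr
    _ = #α + #β + cardT L := by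
      rw [add_right_comm _ (cardT L), add_assoc _ (cardT L), Cardinal.add_eq_self hcardT]
  obtain ⟨σ, hσ, σ', -, hF, htp⟩ := exists_sameTypeOver_not_rel_of_lt_orbitCard (N : Set M)
    ((Cardinal.power_le_power_left two_ne_zero hformulas).trans_lt h)
  have hNκ : #(N : Set M) < κbar :=
    hNα.trans_lt (Cardinal.add_lt_of_lt mon.isRegular.aleph0_le hα mon.cardT_lt)
  obtain ⟨e, he, he0, heF⟩ := mon.exists_indiscOver_not_rel hNκ hβ htp hF
  obtain ⟨τ, hτN, hτ⟩ := mon.exists_aut_of_sameTypeOver hNκ hβ he0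
  exact ⟨e, he.mono haN, ⟨τ * σ, mul_mem_autU (fun i => hτN _ (haN ⟨i, rfl⟩)) hσ, hτ⟩, heF⟩

end Monster

/-- For ultraimaginaries `a_E` and `b_F`, the following are
equivalent: (1) `b_F ∉ bddᵘ(a_E)`; (2) there is an `a`-indiscernible sequence
`(b_i)_{i<ω}` with `b_0 ≡_{a_E} b` and `¬ b_i F b_j` for `i < j`; (3) the orbit of
`b_F` under `Aut(𝕄/a_E)` has cardinality greater than `2^(|ab|+|T|)`. -/
theorem statement_1 (L : FirstOrder.Language.{u, u}) (M : Type u) [L.Structure M]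
    (κbar : Cardinal.{u}) (_mon : Monster L M κbar)
    {α β : Type u} (hα : #α < κbar) (hβ : #β < κbar)
    (E : IER L M α) (a : α → M) (F : IER L M β) (b : β → M) :
    ((¬ BddU L M κbar (autU L M E a) F b) ↔
      (∃ bi : ℕ → β → M, IndiscOver L M (Set.range a) bi ∧
        (∃ σ ∈ autU L M E a, ∀ i, σ (b i) = bi 0 i) ∧
        ∀ i j : ℕ, i < j → ¬ F.rel (bi i) (bi j))) ∧
    ((¬ BddU L M κbar (autU L M E a) F b) ↔
      2 ^ (#α + #β + cardT L) < orbitCard L M (autU L M E a) F b) := by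
  have hμ : #α + #β + cardT L < κbar := Cardinal.add_lt_of_lt _mon.isRegular.aleph0_le
    (Cardinal.add_lt_of_lt _mon.isRegular.aleph0_le hα hβ) _mon.cardT_lt
  have h21 := fun h => bddU_iff_orbitCard_lt.not.mpr (not_lt.mpr
    (_mon.le_orbitCard_of_exists_indiscOver hα hβ (E := E) (a := a) (F := F) (b := b) h))
  have h13 : ¬ BddU L M κbar (autU L M E a) F b →
      2 ^ (#α + #β + cardT L) < orbitCard L M (autU L M E a) F b := fun h =>
    (_mon.strongLimit _ hμ).trans_le (not_lt.mp (bddU_iff_orbitCard_lt.not.mp h))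
  have h32 := _mon.exists_indiscOver_of_lt_orbitCard hα hβ (E := E) (a := a) (F := F) (b := b)
  exact ⟨⟨h32 ∘ h13, h21⟩, ⟨h13, h21 ∘ h32⟩⟩

end BddUltra
end

section
/- Let G ≤ Aut(𝕄) be co-small, witnessed by a small model M with Aut(𝕄/M) ≤ G. Then there is an invariant equivalence relation E on realizations of the type of (an enumeration of) M such that G = Aut(𝕄/M_E), where M_E is the E-class of the enumeration of M. Concretely, the relation E(M₀,M₁) ⟺ 'there exist σ ∈ Aut(𝕄) and τ ∈ G with σ·M = M₀ and στ·M = M₁' is an invariant equivalence relation on realizations of tp(M), and Aut(𝕄/M_E) = G. -/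
/-!
Realizations of `tp(m)` are exactly the translates `σ • m` (strong homogeneity), and
`E(σ • m, σ' • m)` holds iff `σ⁻¹σ' ∈ G`: `E` compares left cosets of `G`, which is well defined
because `Aut(𝕄/m) ≤ G`. This makes `E` an equivalence relation on `tp(m)` whose stabilizer of the
class of `m` is `G`; an automorphism moving `(x, y)` to `(x', y')` carries witnesses of `E x y` to
witnesses of `E x' y'`, which is invariance.
-/

open FirstOrder Cardinal

universe u v w

namespace BddUltra

variable (L : FirstOrder.Language.{u, u}) (M : Type u) [L.Structure M]

section CosetRel

variable {Γ X : Type*} [Group Γ] [MulAction Γ X] (G : Subgroup Γ)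

def CosetRel (m x y : X) : Prop :=
  ∃ σ : Γ, ∃ τ ∈ G, σ • m = x ∧ (σ * τ) • m = y

variable {G} {m x y z : X}

theorem cosetRel_iff :
    CosetRel G m x y ↔ ∃ σ σ' : Γ, σ • m = x ∧ σ' • m = y ∧ σ⁻¹ * σ' ∈ G := by
  constructor
  · rintro ⟨σ, τ, hτ, rfl, rfl⟩
    exact ⟨σ, σ * τ, rfl, rfl, by rwa [inv_mul_cancel_left]⟩
  · rintro ⟨σ, σ', rfl, rfl, hG⟩
    exact ⟨σ, σ⁻¹ * σ', hG, rfl, by rw [mul_inv_cancel_left]⟩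

theorem cosetRel_smul_self (σ : Γ) : CosetRel G m (σ • m) (σ • m) :=
  ⟨σ, 1, G.one_mem, rfl, by rw [mul_one]⟩

theorem CosetRel.symm (h : CosetRel G m x y) : CosetRel G m y x := by
  obtain ⟨σ, σ', hx, hy, hG⟩ := cosetRel_iff.mp h
  exact cosetRel_iff.mpr ⟨σ', σ, hy, hx, by simpa using G.inv_mem hG⟩

theorem CosetRel.smul (π : Γ) (h : CosetRel G m x y) : CosetRel G m (π • x) (π • y) := by
  obtain ⟨σ, τ, hτ, rfl, rfl⟩ := h
  exact ⟨π * σ, τ, hτ, mul_smul .., by rw [mul_assoc, mul_smul]⟩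

theorem inv_mul_mem_of_smul_eq (hG : MulAction.stabilizer Γ m ≤ G) {σ σ' : Γ}
    (h : σ • m = σ' • m) : σ⁻¹ * σ' ∈ G :=
  hG <| by rw [MulAction.mem_stabilizer_iff, mul_smul, ← h, inv_smul_smul]

theorem CosetRel.trans (hG : MulAction.stabilizer Γ m ≤ G) (hxy : CosetRel G m x y)
    (hyz : CosetRel G m y z) : CosetRel G m x z := by
  obtain ⟨σ, σ', hx, rfl, hσ⟩ := cosetRel_iff.mp hxy
  obtain ⟨ρ, ρ', hρ, hz, hρ'⟩ := cosetRel_iff.mp hyz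
  have hσρ : σ'⁻¹ * ρ ∈ G := inv_mul_mem_of_smul_eq hG hρ.symm
  refine cosetRel_iff.mpr ⟨σ, ρ', hx, hz, ?_⟩
  simpa [mul_assoc] using G.mul_mem hσ (G.mul_mem hσρ hρ')

theorem cosetRel_self_smul_iff (hG : MulAction.stabilizer Γ m ≤ G) (σ : Γ) :
    CosetRel G m m (σ • m) ↔ σ ∈ G := by
  constructor
  · intro h
    obtain ⟨ρ, ρ', hρ, hρ', hρρ'⟩ := cosetRel_iff.mp h
    have hρG : ρ ∈ G := hG hρ
    have hρ'σ : ρ'⁻¹ * σ ∈ G := inv_mul_mem_of_smul_eq hG hρ'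
    simpa [mul_assoc] using G.mul_mem hρG (G.mul_mem hρρ' hρ'σ)
  · intro hσ
    exact ⟨1, σ, hσ, one_smul .., by rw [one_mul]⟩

end CosetRel

/-- On tuples this induces `σ • a = ⇑σ ∘ a`, so `CosetRel G m` unfolds to the relation `E` of
the theorem. -/
instance : MulAction (M ≃[L] M) M where
  smul σ x := σ x
  one_smul _ := rfl
  mul_smul _ _ _ := rfl

variable {L M}

theorem SameType.symm {α : Type v} {a b : α → M} (h : SameType L M a b) : SameType L M b a :=
  fun φ => (h φ).symm

theorem Homog.exists_smul_eq {κ : Cardinal.{u}} (hM : Homog L M κ) {α : Type u} {a b : α → M}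
    (hα : #α < κ) (h : SameType L M a b) : ∃ σ : M ≃[L] M, σ • a = b := by
  obtain ⟨σ, hσ⟩ := hM α a b hα h
  exact ⟨σ, funext hσ⟩

theorem Monster.exists_smul_eq_smul_eq {κ : Cardinal.{u}} (hM : Monster L M κ) {α : Type u}
    {a b a' b' : α → M} (hα : #α < κ) (h : SameType L M (Sum.elim a b) (Sum.elim a' b')) :
    ∃ σ : M ≃[L] M, σ • a = a' ∧ σ • b = b' := by
  have hα2 : #(α ⊕ α) < κ := by
    rw [mk_sum, lift_id]
    exact add_lt_of_lt hM.aleph0_lt.le hα hα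
  obtain ⟨σ, hσ⟩ := hM.homog.exists_smul_eq hα2 h
  exact ⟨σ, funext fun i => congrFun hσ (.inl i), funext fun i => congrFun hσ (.inr i)⟩

theorem cosetRel_self_of_sameType {κ : Cardinal.{u}} (hM : Homog L M κ) {α : Type u}
    {G : Subgroup (M ≃[L] M)} {m x : α → M} (hα : #α < κ) (h : SameType L M m x) :
    CosetRel G m x x := by
  obtain ⟨σ, rfl⟩ := hM.exists_smul_eq hα h
  exact cosetRel_smul_self σ

theorem CosetRel.of_sameType {κ : Cardinal.{u}} (hM : Monster L M κ) {α : Type u}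
    {G : Subgroup (M ≃[L] M)} {m x y x' y' : α → M} (hα : #α < κ)
    (h : SameType L M (Sum.elim x y) (Sum.elim x' y')) (hxy : CosetRel G m x y) :
    CosetRel G m x' y' := by
  obtain ⟨π, rfl, rfl⟩ := hM.exists_smul_eq_smul_eq hα h
  exact hxy.smul π

/-- Every co-small subgroup `G ≤ Aut(𝕄)`, witnessed by a small
model `N` with `Aut(𝕄/N) ≤ G`, is of the form `Aut(𝕄/N_E)` for the explicitly
defined invariant equivalence relation `E` on realizations of `tp(N)`:
`E(M₀, M₁)` iff there are `σ ∈ Aut(𝕄)` and `τ ∈ G` with `σ·N = M₀` and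
`στ·N = M₁`. -/
theorem statement_3 (L : FirstOrder.Language.{u, u}) (M : Type u) [L.Structure M]
    (κbar : Cardinal.{u}) (_mon : Monster L M κbar)
    (G : Subgroup (M ≃[L] M))
    (N : L.ElementarySubstructure M) (hN : #(N : Set M) < κbar)
    (hG : autES L M N ⊆ (G : Set (M ≃[L] M))) :
    let m : ↥(N : Set M) → M := Subtype.val
    let E : (↥(N : Set M) → M) → (↥(N : Set M) → M) → Prop := fun x y =>
      ∃ σ : M ≃[L] M, ∃ τ ∈ G, ⇑σ ∘ m = x ∧ (⇑σ ∘ ⇑τ) ∘ m = y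
    (∀ x, SameType L M m x → E x x) ∧
    (∀ x y, E x y → E y x) ∧
    (∀ x y z, E x y → E y z → E x z) ∧
    (∀ x y x' y', SameType L M (Sum.elim x y) (Sum.elim x' y') → (E x y ↔ E x' y')) ∧
    {σ : M ≃[L] M | E m (⇑σ ∘ m)} = (G : Set (M ≃[L] M)) := by
  intro m _
  have hstab : MulAction.stabilizer (M ≃[L] M) m ≤ G := fun σ hσ =>
    hG fun x hx => congrFun hσ ⟨x, hx⟩
  exact ⟨fun _ => cosetRel_self_of_sameType _mon.homog hN, fun _ _ => CosetRel.symm,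
    fun _ _ _ => CosetRel.trans hstab,
    fun _ _ _ _ h => ⟨CosetRel.of_sameType _mon hN h, CosetRel.of_sameType _mon hN h.symm⟩,
    Set.ext fun σ => cosetRel_self_smul_iff hstab σ⟩

end BddUltra
end
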